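/- arXiv:math/0209232 — 2 statements merged into one kernel-verified Lean document; each statement's English description precedes it below -/
import Mathlib

section
/- Let α and β be integers with 6 < α ≤ β. Suppose every even integer m with 2 < m < α is the sum of two primes, and suppose that for every prime p ≤ β - α + 1 the next prime after p is at most p + α - 4. Then every odd integer n with α ≤ n ≤ β is the sum of three primes. -/
theorem ternary_goldbach_from_gaps (α β : ℕ) (hα : 6 < α) (hαβ : α ≤ β)
    (hgoldbach : ∀ m : ℕ, 2 < m → m < α → Even m →
      ∃ p q : ℕ, p.Prime ∧ q.Prime ∧ m = p + q)
    (hgap : ∀ p : ℕ, p.Prime → p ≤ β - α + 1 →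
      ∃ q : ℕ, q.Prime ∧ p < q ∧ q ≤ p + α - 4) :
    ∀ n : ℕ, Odd n → α ≤ n → n ≤ β →
      ∃ a b c : ℕ, a.Prime ∧ b.Prime ∧ c.Prime ∧ n = a + b + c := by
  intro n hodd hαn hnβ
  have key : ∀ k p, p.Prime → 3 ≤ p → p ≤ n - 4 → n - 4 - p ≤ k →
      ∃ q, q.Prime ∧ 3 ≤ q ∧ n - α + 1 ≤ q ∧ q ≤ n - 4 := by
    intro k
    induction k with
    | zero =>
      intro p hp h3 hle h0
      exact ⟨p, hp, h3, by omega, hle⟩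
    | succ k ih =>
      intro p hp h3 hle hk
      by_cases hcase : n - α + 1 ≤ p
      · exact ⟨p, hp, h3, hcase, hle⟩
      · have hpβ : p ≤ β - α + 1 := by omega
        obtain ⟨q, hq, hpq, hqle⟩ := hgap p hp hpβ
        exact ih q hq (by omega) (by omega) (by omega)
  obtain ⟨p, hp, h3p, hlow, hhigh⟩ :=
    key (n - 4 - 3) 3 (by norm_num) le_rfl (by omega) le_rfl
  have hpodd : Odd p := hp.odd_of_ne_two (by omega)
  have hr1 : 2 < n - p := by omega
  have hr2 : n - p < α := by omega
  have hr3 : Even (n - p) := by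
    obtain ⟨a, ha⟩ := hodd
    obtain ⟨b, hb⟩ := hpodd
    exact ⟨a - b, by omega⟩
  obtain ⟨q, s, hq, hs, hqs⟩ := hgoldbach (n - p) hr1 hr2 hr3
  exact ⟨p, q, s, hp, hq, hs, by omega⟩
end

section
/- If every interval (k, k + G] with k + G ≤ N contains a prime for some fixed G ≥ 2, and every even integer m with 2 < m ≤ G + 4 is a sum of two primes, then every odd integer n with 5 < n ≤ N is a sum of three primes. -/
theorem ternary_goldbach_from_interval_primes (G N : ℕ) (hG : 2 ≤ G)
    (hGN : G + 4 ≤ N)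
    (hint : ∀ k : ℕ, 2 ≤ k → k + G ≤ N → ∃ p : ℕ, p.Prime ∧ k < p ∧ p ≤ k + G)
    (hgoldbach : ∀ m : ℕ, 2 < m → m ≤ G + 4 → Even m →
      ∃ p q : ℕ, p.Prime ∧ q.Prime ∧ m = p + q) :
    ∀ n : ℕ, Odd n → 5 < n → n ≤ N →
      ∃ a b c : ℕ, a.Prime ∧ b.Prime ∧ c.Prime ∧ n = a + b + c := by
  intro n hodd hn5 hnN
  rcases le_or_gt n (G + 5) with hle | hgt
  · -- use a = 3
    have h1 : 2 < n - 3 := by omega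
    have h2 : n - 3 ≤ G + 4 := by omega
    have h3 : Even (n - 3) := by
      rcases hodd with ⟨k, hk⟩
      exact ⟨k - 1, by omega⟩
    obtain ⟨p, q, hp, hq, hpq⟩ := hgoldbach (n - 3) h1 h2 h3
    exact ⟨3, p, q, Nat.prime_three, hp, hq, by omega⟩
  · -- n ≥ G + 6, pick prime in (n - G - 4, n - 4]
    obtain ⟨p, hp, hp1, hp2⟩ := hint (n - G - 4) (by omega) (by omega)
    have hpodd : p ≠ 2 := by omega
    have hodd_p : Odd p := hp.odd_of_ne_two hpodd
    have h1 : 2 < n - p := by omega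
    have h2 : n - p ≤ G + 4 := by omega
    have h3 : Even (n - p) := by
      rcases hodd with ⟨k, hk⟩
      rcases hodd_p with ⟨j, hj⟩
      exact ⟨k - j, by omega⟩
    obtain ⟨a, b, ha, hb, hab⟩ := hgoldbach (n - p) h1 h2 h3
    exact ⟨p, a, b, hp, ha, hb, by omega⟩
end
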